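/- Let G = (V, E, R, c, η) be a knowledge graph with pairwise coloring η. For all ℓ ≥ 0, the pairwise coloring hcwl_2^(ℓ) computed on G coincides with the node coloring hrwl_1^(ℓ) computed on the auxiliary knowledge graph G²: for all u, v, u', v' ∈ V, hcwl_2^(ℓ)(G, u, v) = hcwl_2^(ℓ)(G, u', v') if and only if hrwl_1^(ℓ)(G², (u, v)) = hrwl_1^(ℓ)(G², (u', v')). -/

import Mathlib

/-- A relational hypergraph over node set `V`, relation types `R` with arities `ar`.
A hyperedge (fact) `r(u₁,…,u_k)` is a pair of a relation type `r` and the tuple of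
its nodes, of length `k = ar r`. -/
structure RelHG (V R : Type) (ar : R → ℕ) where
  edges : Finset (Σ r : R, Fin (ar r) → V)

variable {V R D : Type} {ar : R → ℕ}

/-- `E(v)`: the set of edge–position pairs `(e, i)` with `e(i) = v`. -/
def RelHG.incid [DecidableEq V] (H : RelHG V R ar) (v : V) :
    Finset (Σ e : Σ r : R, Fin (ar r) → V, Fin (ar e.1)) :=
  (H.edges.sigma fun e => (Finset.univ : Finset (Fin (ar e.1)))).filter
    fun p => p.1.2 p.2 = v

/-- Colors used by the canonical (`τ = id`) hypergraph relational 1-WL test after `ℓ`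
rounds, starting from colors in `D`. -/
def WLC (D R : Type) : ℕ → Type :=
  fun ℓ => Nat.rec D (fun _ ih => ih × Multiset (Set (ih × ℕ) × R)) ℓ

/-- The hypergraph relational 1-WL test `hrwl₁`, with the canonical injective `τ`
(pairing), starting from the node coloring `c`. -/
def RelHG.hrwl [DecidableEq V] (H : RelHG V R ar) (c : V → D) :
    (ℓ : ℕ) → V → WLC D R ℓ
  | 0 => c
  | ℓ + 1 => fun v =>
      ⟨RelHG.hrwl H c ℓ v,
        (H.incid v).val.map fun ei =>
          ({p : WLC D R ℓ × ℕ |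
              ∃ j : Fin (ar ei.1.1), j ≠ ei.2 ∧
                p = (RelHG.hrwl H c ℓ (ei.1.2 j), (j : ℕ))},
            ei.1.1)⟩

/-- A hypergraph relational MPNN (HR-MPNN): layer dimensions `d`, message spaces `M`,
aggregation spaces `A`, and arbitrary relation-specific message, aggregation and
update functions for every layer. -/
structure HRMPNN (R : Type) where
  d : ℕ → ℕ
  M : ℕ → Type
  A : ℕ → Type
  msg : (ℓ : ℕ) → R → Set ((Fin (d ℓ) → ℝ) × ℕ) → M ℓ
  agg : (ℓ : ℕ) → (Fin (d ℓ) → ℝ) → Multiset (M ℓ) → A ℓ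
  up : (ℓ : ℕ) → (Fin (d ℓ) → ℝ) → A ℓ → Fin (d (ℓ + 1)) → ℝ

/-- The feature maps `h⁽ℓ⁾` computed by an HR-MPNN on a relational hypergraph `H`
from the initial feature map `x`. -/
def HRMPNN.h [DecidableEq V] (net : HRMPNN R) (H : RelHG V R ar)
    (x : V → Fin (net.d 0) → ℝ) : (ℓ : ℕ) → V → Fin (net.d ℓ) → ℝ
  | 0 => x
  | ℓ + 1 => fun v =>
      net.up ℓ (HRMPNN.h net H x ℓ v)
        (net.agg ℓ (HRMPNN.h net H x ℓ v)
          ((H.incid v).val.map fun ei =>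
            net.msg ℓ ei.1.1
              {p : (Fin (net.d ℓ) → ℝ) × ℕ |
                ∃ j : Fin (ar ei.1.1), j ≠ ei.2 ∧
                  p = (HRMPNN.h net H x ℓ (ei.1.2 j), (j : ℕ))}))

/-- A query `q = (q, ũ, t)` on a relational hypergraph: a relation type `q`, a
querying position `t`, and an assignment `ũ` of nodes to the remaining positions. -/
structure Query (V R : Type) (ar : R → ℕ) where
  rel : R
  t : Fin (ar rel)
  u : {j : Fin (ar rel) // j ≠ t} → V

/-- A hypergraph conditional MPNN (HC-MPNN): an initialization function together with
arbitrary relation-specific message, aggregation and update functions per layer (the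
message function may additionally depend on the query). -/
structure HCMPNN (V R : Type) (ar : R → ℕ) where
  d : ℕ → ℕ
  M : ℕ → Type
  A : ℕ → Type
  init : V → Query V R ar → Fin (d 0) → ℝ
  msg : (ℓ : ℕ) → R → Set ((Fin (d ℓ) → ℝ) × ℕ) → Query V R ar → M ℓ
  agg : (ℓ : ℕ) → (Fin (d ℓ) → ℝ) → Multiset (M ℓ) → A ℓ
  up : (ℓ : ℕ) → (Fin (d ℓ) → ℝ) → A ℓ → Fin (d (ℓ + 1)) → ℝ

/-- The conditional feature maps `h⁽ℓ⁾_{·|q}` computed by an HC-MPNN on a relational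
hypergraph `H` for the query `q`. -/
def HCMPNN.h [DecidableEq V] (net : HCMPNN V R ar) (H : RelHG V R ar)
    (q : Query V R ar) : (ℓ : ℕ) → V → Fin (net.d ℓ) → ℝ
  | 0 => fun v => net.init v q
  | ℓ + 1 => fun v =>
      net.up ℓ (HCMPNN.h net H q ℓ v)
        (net.agg ℓ (HCMPNN.h net H q ℓ v)
          ((H.incid v).val.map fun ei =>
            net.msg ℓ ei.1.1
              {p : (Fin (net.d ℓ) → ℝ) × ℕ |
                ∃ j : Fin (ar ei.1.1), j ≠ ei.2 ∧
                  p = (HCMPNN.h net H q ℓ (ei.1.2 j), (j : ℕ))}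
              q))

/-- A node coloring `c` satisfies generalized target node distinguishability with
respect to the query `q = (q, ũ, t)`: nodes in `ũ` get colors different from all
nodes outside `ũ`, and distinct nodes occurring in `ũ` get distinct colors. -/
def GTND {D : Type} (c : V → D) (q : Query V R ar) : Prop :=
  (∀ (i : {j : Fin (ar q.rel) // j ≠ q.t}) (v : V),
      v ∉ Set.range q.u → c (q.u i) ≠ c v) ∧
  (∀ i j : {j : Fin (ar q.rel) // j ≠ q.t}, q.u i ≠ q.u j → c (q.u i) ≠ c (q.u j))

/-- The tail query `(q, (u), 2)` on a knowledge graph: predict the tail of `q(u, ?)`. -/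
def tailQuery {V R : Type} (q : R) (u : V) : Query V R (fun _ => 2) :=
  ⟨q, ⟨1, Nat.one_lt_two⟩, fun _ => u⟩

/-- The test `hcwl₂` on a knowledge graph `H` (with the canonical injective `τ`),
computing pairwise colorings from the initial pairwise coloring `η`. -/
def hcwl2 {V R D : Type} [DecidableEq V] (H : RelHG V R (fun _ => 2))
    (η : V → V → D) : (ℓ : ℕ) → V → V → WLC D R ℓ
  | 0 => η
  | ℓ + 1 => fun u v =>
      ⟨hcwl2 H η ℓ u v,
        (H.incid v).val.map fun ei =>
          ({p : WLC D R ℓ × ℕ |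
              ∃ j : Fin 2, j ≠ ei.2 ∧
                p = (hcwl2 H η ℓ u (ei.1.2 j), (j : ℕ))},
            ei.1.1)⟩

/-- A knowledge graph is a relational hypergraph in which every relation has arity
exactly `2`.  `kgFact r u v` is the binary fact `r(u, v)`. -/
def kgFact {V R : Type} (r : R) (u v : V) :
    (Σ r' : R, Fin ((fun _ : R => 2) r') → V) :=
  ⟨r, ![u, v]⟩

/-- The auxiliary knowledge graph `G²` of a knowledge graph `G`: its nodes are the
pairs `V × V`, and it has the fact `r((u, w), (u, v))` for every fact `r(w, v)` of `G`
and every `u ∈ V`. -/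
def auxKG {V R : Type} [Fintype V] [DecidableEq V] [DecidableEq R]
    (H : RelHG V R (fun _ => 2)) : RelHG (V × V) R (fun _ => 2) where
  edges :=
    (H.edges ×ˢ (Finset.univ : Finset V)).image fun p =>
      kgFact p.1.1 (p.2, p.1.2 ⟨0, Nat.zero_lt_two⟩) (p.2, p.1.2 ⟨1, Nat.one_lt_two⟩)

/-
The auxiliary graph `G²` is a disjoint union of copies of `G`, one for each first coordinate `u`:
the facts of `G²` at the node `(u, v)` are exactly the facts of `G` at `v`, relabelled by
`w ↦ (u, w)`.  Hence the `hrwl₁` refinement at `(u, v)` in `G²` performs literally the same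
computation as the `hcwl₂` refinement at `(u, v)` in `G`, and by induction on `ℓ` the two
colorings are equal, not merely equally fine.
-/

def liftFact {W : Type} (u : W) (e : Σ r : R, Fin (ar r) → V) : Σ r : R, Fin (ar r) → W × V :=
  ⟨e.1, fun i => (u, e.2 i)⟩

theorem liftFact_injective {W : Type} (u : W) :
    Function.Injective (liftFact (ar := ar) (V := V) u) := by
  rintro ⟨r, t⟩ ⟨r', t'⟩ h
  obtain ⟨rfl, h⟩ := Sigma.mk.inj_iff.mp h
  congr
  funext i
  exact congrArg Prod.snd (congrFun (eq_of_heq h) i)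

def liftIncid {W : Type} (u : W) :
    (Σ e : Σ r : R, Fin (ar r) → V, Fin (ar e.1)) ↪
      (Σ e : Σ r : R, Fin (ar r) → W × V, Fin (ar e.1)) where
  toFun p := ⟨liftFact u p.1, p.2⟩
  inj' := by
    rintro ⟨e, i⟩ ⟨e', i'⟩ h
    obtain ⟨he, hi⟩ := Sigma.mk.inj_iff.mp h
    exact Sigma.ext (liftFact_injective u he) hi

theorem kgFact_eq_liftFact (r : R) (u : V) (t : Fin 2 → V) :
    kgFact r (u, t 0) (u, t 1) = liftFact u ⟨r, t⟩ := by
  simp only [kgFact, liftFact, Sigma.mk.injEq, heq_eq_eq, true_and]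
  funext i
  fin_cases i <;> rfl

section auxKG

variable [Fintype V] [DecidableEq V] [DecidableEq R]

theorem mem_auxKG_edges {H : RelHG V R (fun _ => 2)} {e : Σ _ : R, Fin 2 → V × V} :
    e ∈ (auxKG H).edges ↔ ∃ e₀ ∈ H.edges, ∃ u, liftFact u e₀ = e := by
  simp only [auxKG, Finset.mem_image, Finset.mem_product, Finset.mem_univ, and_true,
    Prod.exists]
  constructor
  · rintro ⟨⟨r, t⟩, u, he, rfl⟩
    exact ⟨⟨r, t⟩, he, u, (kgFact_eq_liftFact r u t).symm⟩
  · rintro ⟨⟨r, t⟩, he, u, rfl⟩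
    exact ⟨⟨r, t⟩, u, he, kgFact_eq_liftFact r u t⟩

theorem incid_auxKG (H : RelHG V R (fun _ => 2)) (u v : V) :
    (auxKG H).incid (u, v) = (H.incid v).map (liftIncid u) := by
  ext ⟨e, i⟩
  simp only [RelHG.incid, Finset.mem_map, Finset.mem_filter, Finset.mem_sigma,
    Finset.mem_univ, and_true, mem_auxKG_edges]
  constructor
  · rintro ⟨⟨e₀, he₀, w, rfl⟩, hi⟩
    obtain ⟨rfl, hv⟩ := Prod.ext_iff.mp hi
    exact ⟨⟨e₀, i⟩, ⟨he₀, hv⟩, rfl⟩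
  · rintro ⟨⟨e₀, i₀⟩, ⟨he₀, hv⟩, h⟩
    cases h
    exact ⟨⟨e₀, he₀, u, rfl⟩, congrArg (Prod.mk u) hv⟩

theorem hrwl_auxKG_eq_hcwl2 (H : RelHG V R (fun _ => 2)) (η : V → V → D) (ℓ : ℕ) (u v : V) :
    (auxKG H).hrwl (fun p => η p.1 p.2) ℓ (u, v) = hcwl2 H η ℓ u v := by
  induction ℓ generalizing v with
  | zero => rfl
  | succ ℓ ih =>
    simp only [RelHG.hrwl, hcwl2, ih, incid_auxKG, Finset.map_val, Multiset.map_map]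
    congr 1
    refine Multiset.map_congr rfl fun ei _ => ?_
    simp [liftIncid, liftFact, ih]

end auxKG

theorem hcwl2_coincides_hrwl_on_auxKG_general
    {V R D : Type} [Fintype V] [DecidableEq V] [DecidableEq R]
    (H : RelHG V R (fun _ => 2)) (η : V → V → D) (ℓ : ℕ) :
    ∀ u v u' v' : V,
      hcwl2 H η ℓ u v = hcwl2 H η ℓ u' v' ↔
        RelHG.hrwl (auxKG H) (fun p => η p.1 p.2) ℓ (u, v) =
          RelHG.hrwl (auxKG H) (fun p => η p.1 p.2) ℓ (u', v') := by
  intro u v u' v'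
  rw [hrwl_auxKG_eq_hcwl2, hrwl_auxKG_eq_hcwl2]

/-- Let `G = (V, E, R, c, η)` be a knowledge graph with pairwise
coloring `η`.  For all `ℓ ≥ 0`, the pairwise coloring `hcwl₂⁽ℓ⁾` computed on `G`
coincides with the node coloring `hrwl₁⁽ℓ⁾` computed on the auxiliary knowledge graph
`G²` (with node coloring `c_η((u, v)) = η(u, v)`): they induce the same partition of
`V × V`. -/
theorem hcwl2_coincides_hrwl_on_auxKG
    {V R C D : Type} [Fintype V] [DecidableEq V] [Fintype R] [DecidableEq R]
    (H : RelHG V R (fun _ => 2)) (c : V → C) (η : V → V → D) (ℓ : ℕ) :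
    ∀ u v u' v' : V,
      hcwl2 H η ℓ u v = hcwl2 H η ℓ u' v' ↔
        RelHG.hrwl (auxKG H) (fun p => η p.1 p.2) ℓ (u, v) =
          RelHG.hrwl (auxKG H) (fun p => η p.1 p.2) ℓ (u', v') :=
  hcwl2_coincides_hrwl_on_auxKG_general H η ℓ
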